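/- Suppose the loss ℓ_j(x) := ℓ(M(f_j(x)),y) is differentiable with L-Lipschitz gradient, g_j := ∇ℓ_j(x), and the attack succeeds on pipeline j only when ℓ_j(x+δ) - ℓ_j(x) ≥ m for a margin m > 0. If δ = ε·g_i/‖g_i‖, ‖g_j‖ ≤ G, and ⟪g_i,g_j⟫ ≥ 0, then a necessary condition for success is ε·G·√Γ(g_i,g_j) + (L/2)·ε² ≥ m. In particular, if ε·G·√Γ(g_i,g_j) + (L/2)ε² < m, the attack crafted on f_i fails to transfer to f_j. -/

import Mathlib

/-!
The descent lemma for an `L`-smooth loss gives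
`ℓ_j(x + δ) - ℓ_j(x) ≤ ⟪g_j, δ⟫ + (L/2)‖δ‖²`, and `‖δ‖ = ε`. Along the unit direction
`g_i/‖g_i‖` the first-order term is `ε ‖g_j‖ cos θ`, where `cos θ = ⟪g_i, g_j⟫/(‖g_i‖‖g_j‖)`
and `|cos θ| = √Γ(g_i, g_j)`; bounding `‖g_j‖ ≤ G` yields the claim.
-/

open RealInnerProductSpace

section DescentLemma

variable {E : Type*} [NormedAddCommGroup E] [InnerProductSpace ℝ E] [CompleteSpace E]
  {f : E → ℝ} {L : ℝ}

theorem hasDerivAt_comp_add_smul (hf : Differentiable ℝ f) (x v : E) (t : ℝ) :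
    HasDerivAt (fun s : ℝ => f (x + s • v)) ⟪gradient f (x + t • v), v⟫ t := by
  have hline : HasDerivAt (fun s : ℝ => x + s • v) v t := by
    simpa using ((hasDerivAt_id t).smul_const v).const_add x
  exact (hf (x + t • v)).hasGradientAt.hasFDerivAt.comp_hasDerivAt t hline

theorem inner_gradient_add_smul_sub_le
    (hLip : ∀ a b : E, ‖gradient f a - gradient f b‖ ≤ L * ‖a - b‖)
    (x v : E) {t : ℝ} (ht : 0 ≤ t) :
    ⟪gradient f (x + t • v) - gradient f x, v⟫ ≤ L * t * ‖v‖ ^ 2 :=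
  calc ⟪gradient f (x + t • v) - gradient f x, v⟫
      ≤ ‖gradient f (x + t • v) - gradient f x‖ * ‖v‖ := real_inner_le_norm _ _
    _ ≤ L * ‖(x + t • v) - x‖ * ‖v‖ := by gcongr; exact hLip _ _
    _ = L * t * ‖v‖ ^ 2 := by
        rw [add_sub_cancel_left, norm_smul, Real.norm_of_nonneg ht]; ring

theorem le_add_inner_gradient_add_sq (hf : Differentiable ℝ f)
    (hLip : ∀ a b : E, ‖gradient f a - gradient f b‖ ≤ L * ‖a - b‖) (x v : E) :
    f (x + v) ≤ f x + ⟪gradient f x, v⟫ + L / 2 * ‖v‖ ^ 2 := by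
  set φ : ℝ → ℝ := fun t => f (x + t • v) - t * ⟪gradient f x, v⟫ - L / 2 * t ^ 2 * ‖v‖ ^ 2
  set φ' : ℝ → ℝ := fun t =>
    ⟪gradient f (x + t • v), v⟫ - ⟪gradient f x, v⟫ - L / 2 * (2 * t) * ‖v‖ ^ 2
  have hφ : ∀ t, HasDerivAt φ (φ' t) t := fun t => by
    have h := ((hasDerivAt_comp_add_smul hf x v t).sub
      ((hasDerivAt_id t).mul_const ⟪gradient f x, v⟫)).sub
      (((hasDerivAt_pow 2 t).const_mul (L / 2)).mul_const (‖v‖ ^ 2))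
    exact h.congr_deriv (by simp only [φ']; push_cast; ring)
  have hφ'_nonpos : ∀ t ∈ interior (Set.Icc (0 : ℝ) 1), φ' t ≤ 0 := fun t ht => by
    rw [interior_Icc] at ht
    have h := inner_gradient_add_smul_sub_le hLip x v ht.1.le
    rw [inner_sub_left] at h
    simp only [φ']
    linarith
  have hanti : AntitoneOn φ (Set.Icc 0 1) :=
    antitoneOn_of_hasDerivWithinAt_nonpos (convex_Icc 0 1)
      (fun t _ => (hφ t).continuousAt.continuousWithinAt)
      (fun t _ => (hφ t).hasDerivWithinAt) hφ'_nonpos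
  have h01 := hanti (by norm_num : (0 : ℝ) ∈ Set.Icc (0 : ℝ) 1)
    (by norm_num : (1 : ℝ) ∈ Set.Icc (0 : ℝ) 1) zero_le_one
  simp only [φ, zero_smul, add_zero, one_smul, zero_mul, one_pow, mul_one, sub_zero] at h01
  linarith

end DescentLemma

/-- Through the junk value `0 / 0 = 0`, both sides vanish when `a = 0` or `b = 0`. -/
theorem inner_inv_norm_smul_eq_norm_mul_cos {E : Type*} [NormedAddCommGroup E]
    [InnerProductSpace ℝ E] (a b : E) :
    ⟪b, ‖a‖⁻¹ • a⟫ = ‖b‖ * (⟪a, b⟫ / (‖a‖ * ‖b‖)) := by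
  rcases eq_or_ne b 0 with rfl | hb
  · simp
  · rw [real_inner_smul_right, real_inner_comm]
    field_simp [norm_ne_zero_iff.mpr hb]

theorem transfer_necessary_condition_general
    {E : Type*} [NormedAddCommGroup E] [InnerProductSpace ℝ E] [CompleteSpace E]
    (ℓj : E → ℝ) (hdiff : Differentiable ℝ ℓj)
    (L : ℝ)
    (hLip : ∀ a b : E, ‖gradient ℓj a - gradient ℓj b‖ ≤ L * ‖a - b‖)
    (x : E) (g_i g_j : E) (hgi : g_i ≠ 0) (hgj : g_j = gradient ℓj x)
    (G : ℝ) (hG : ‖g_j‖ ≤ G)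
    (ε m : ℝ) (hε : 0 < ε)
    (δ : E) (hδ : δ = ε • (‖g_i‖⁻¹ • g_i))
    (hsuccess : m ≤ ℓj (x + δ) - ℓj x) :
    m ≤ ε * G * Real.sqrt ((⟪g_i, g_j⟫ / (‖g_i‖ * ‖g_j‖))^2) + (L / 2) * ε^2 := by
  have hnorm : ‖δ‖ = ε := by
    rw [hδ, norm_smul, norm_smul, norm_inv, norm_norm, inv_mul_cancel₀ (norm_ne_zero_iff.mpr hgi),
      mul_one, Real.norm_of_nonneg hε.le]
  have hdescent := le_add_inner_gradient_add_sq hdiff hLip x δ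
  rw [← hgj, hnorm] at hdescent
  have hfirst : ⟪g_j, δ⟫ ≤ ε * G * |⟪g_i, g_j⟫ / (‖g_i‖ * ‖g_j‖)| := by
    rw [hδ, real_inner_smul_right, inner_inv_norm_smul_eq_norm_mul_cos, mul_assoc]
    gcongr ε * ?_
    exact le_trans (mul_le_mul_of_nonneg_left (le_abs_self _) (norm_nonneg _))
      (mul_le_mul_of_nonneg_right hG (abs_nonneg _))
  rw [Real.sqrt_sq_eq_abs]
  linarith

theorem transfer_necessary_condition
    {E : Type*} [NormedAddCommGroup E] [InnerProductSpace ℝ E] [CompleteSpace E]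
    (ℓj : E → ℝ) (hdiff : Differentiable ℝ ℓj)
    (L : ℝ) (hL : 0 ≤ L)
    (hLip : ∀ a b : E, ‖gradient ℓj a - gradient ℓj b‖ ≤ L * ‖a - b‖)
    (x : E) (g_i g_j : E) (hgi : g_i ≠ 0) (hgj : g_j = gradient ℓj x)
    (G : ℝ) (hG : ‖g_j‖ ≤ G)
    (ε m : ℝ) (hε : 0 < ε) (hm : 0 < m)
    (hpos : 0 ≤ ⟪g_i, g_j⟫)
    (δ : E) (hδ : δ = ε • (‖g_i‖⁻¹ • g_i))
    (hsuccess : m ≤ ℓj (x + δ) - ℓj x) :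
    m ≤ ε * G * Real.sqrt ((⟪g_i, g_j⟫ / (‖g_i‖ * ‖g_j‖))^2) + (L / 2) * ε^2 :=
  transfer_necessary_condition_general ℓj hdiff L hLip x g_i g_j hgi hgj G hG ε m hε δ hδ hsuccess
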